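/- Suppose a monic Laurent series h evolves by the KP equations ∂h/∂t_j = ∂_x H^{(j)}, where H^{(j)} are the currents. Then the operator ∂/∂t_j + H^{(j)} preserves the span H₊ of the Faà di Bruno iterates: (∂/∂t_j + H^{(j)})(H₊) ⊆ H₊. -/

import Mathlib

/- Formal Laurent series in `z⁻¹` are modelled as Hahn series in `ζ = z⁻¹`:
the coefficient of `z^m` is the coefficient at index `-m`.  The coefficient
ring `R` consists of functions of `x` and the times `t_j`; it carries commuting
derivations `d = ∂_x` and `dT j = ∂/∂t_j`, all acting coefficientwise on
Laurent series. -/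

variable {R : Type*} [CommRing R]

/-- Coefficientwise action of a derivation on Laurent series. -/
noncomputable def liftD (d : R →+ R) (f : HahnSeries ℤ R) : HahnSeries ℤ R where
  coeff n := d (f.coeff n)
  isPWO_support' := f.isPWO_support'.mono (by
    intro n hn
    simp only [Function.mem_support] at hn ⊢
    intro h0
    exact hn (by rw [h0, map_zero]))

/-- Faà di Bruno iterates: `h⁽⁰⁾ = 1`, `h⁽ʲ⁺¹⁾ = (∂_x + h)·h⁽ʲ⁾`. -/
noncomputable def fdb (d : R →+ R) (h : HahnSeries ℤ R) : ℕ → HahnSeries ℤ R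
  | 0 => 1
  | j + 1 => liftD d (fdb d h j) + h * fdb d h j

/-! The KP flow makes `∂_x + h` and `∂/∂t_j + H⁽ʲ⁾` commute: the cross terms cancel exactly
because `∂h/∂t_j = ∂_x H⁽ʲ⁾`. Since `H₊` is spanned by the orbit of `1` under `∂_x + h`, and
`(∂/∂t_j + H⁽ʲ⁾) 1 = H⁽ʲ⁾ ∈ H₊`, commutation carries `H₊` into itself along that orbit. Both
operators satisfy the Leibniz rule over `R`, so it suffices to check them on the spanning set. -/

/-- The first-order operator `D + g` acting on Laurent series. -/
noncomputable def covD (D : R →+ R) (g f : HahnSeries ℤ R) : HahnSeries ℤ R :=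
  liftD D f + g * f

@[simp] lemma liftD_coeff (D : R →+ R) (f : HahnSeries ℤ R) (n : ℤ) :
    (liftD D f).coeff n = D (f.coeff n) := rfl

lemma liftD_support_subset (D : R →+ R) (f : HahnSeries ℤ R) :
    (liftD D f).support ⊆ f.support := fun n hn h0 => hn (by simp [h0])

lemma liftD_zero (D : R →+ R) : liftD D (0 : HahnSeries ℤ R) = 0 := by
  ext n; simp

lemma liftD_add (D : R →+ R) (f g : HahnSeries ℤ R) :
    liftD D (f + g) = liftD D f + liftD D g := by
  ext n; simp

lemma liftD_comm {D₁ D₂ : R →+ R} (hcomm : ∀ a, D₂ (D₁ a) = D₁ (D₂ a))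
    (f : HahnSeries ℤ R) : liftD D₂ (liftD D₁ f) = liftD D₁ (liftD D₂ f) := by
  ext n; exact hcomm _

section Leibniz

variable {D : R →+ R} (hD : ∀ a b : R, D (a * b) = D a * b + a * D b)
include hD

lemma liftD_smul (c : R) (f : HahnSeries ℤ R) :
    liftD D (c • f) = D c • f + c • liftD D f := by
  ext n
  simp [smul_eq_mul, hD]

lemma liftD_mul (f g : HahnSeries ℤ R) :
    liftD D (f * g) = liftD D f * g + f * liftD D g := by
  ext n
  have hleft : (liftD D f * g).coeff n =
      ∑ ij ∈ Finset.antidiagonal f.isPWO_support g.isPWO_support n,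
        D (f.coeff ij.1) * g.coeff ij.2 :=
    HahnSeries.coeff_mul_left' f.isPWO_support (liftD_support_subset D f)
  have hright : (f * liftD D g).coeff n =
      ∑ ij ∈ Finset.antidiagonal f.isPWO_support g.isPWO_support n,
        f.coeff ij.1 * D (g.coeff ij.2) :=
    HahnSeries.coeff_mul_right' g.isPWO_support (liftD_support_subset D g)
  simp only [HahnSeries.coeff_add, liftD_coeff, HahnSeries.coeff_mul, map_sum, hD,
    hleft, hright, Finset.sum_add_distrib]

lemma liftD_one : liftD D (1 : HahnSeries ℤ R) = 0 := by
  have hD1 : D 1 = 0 := by simpa using hD 1 1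
  ext n
  rw [liftD_coeff, HahnSeries.coeff_one, HahnSeries.coeff_zero]
  split <;> simp [hD1]

lemma covD_one (g : HahnSeries ℤ R) : covD D g 1 = g := by
  simp [covD, liftD_one hD]

lemma covD_smul (g : HahnSeries ℤ R) (c : R) (f : HahnSeries ℤ R) :
    covD D g (c • f) = c • covD D g f + D c • f := by
  rw [covD, covD, liftD_smul hD]
  simp only [smul_add, ← HahnSeries.C_mul_eq_smul]
  ring

lemma covD_mem_span_of_forall_mem {s : Set (HahnSeries ℤ R)} (g : HahnSeries ℤ R)
    (hs : ∀ v ∈ s, covD D g v ∈ Submodule.span R s) :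
    ∀ f ∈ Submodule.span R s, covD D g f ∈ Submodule.span R s := by
  intro f hf
  induction hf using Submodule.span_induction with
  | mem v hv => exact hs v hv
  | zero => simp [covD, liftD_zero]
  | add x y _ _ hx hy =>
    have hsplit : covD D g (x + y) = covD D g x + covD D g y := by
      simp only [covD, liftD_add]; ring
    exact hsplit ▸ add_mem hx hy
  | smul c x hx_mem hx =>
    rw [covD_smul hD]
    exact add_mem (Submodule.smul_mem _ _ hx) (Submodule.smul_mem _ _ hx_mem)

end Leibniz

lemma covD_comm {D₁ D₂ : R →+ R}
    (hD₁ : ∀ a b : R, D₁ (a * b) = D₁ a * b + a * D₁ b)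
    (hD₂ : ∀ a b : R, D₂ (a * b) = D₂ a * b + a * D₂ b)
    (hcomm : ∀ a, D₂ (D₁ a) = D₁ (D₂ a)) {g₁ g₂ : HahnSeries ℤ R}
    (hzc : liftD D₂ g₁ = liftD D₁ g₂) (f : HahnSeries ℤ R) :
    covD D₂ g₂ (covD D₁ g₁ f) = covD D₁ g₁ (covD D₂ g₂ f) := by
  simp only [covD, liftD_add, liftD_mul hD₁, liftD_mul hD₂, hzc, liftD_comm hcomm]
  ring

lemma fdb_succ (d : R →+ R) (h : HahnSeries ℤ R) (k : ℕ) :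
    fdb d h (k + 1) = covD d h (fdb d h k) := rfl

lemma covD_mem_span_fdb {d : R →+ R} (hd : ∀ a b : R, d (a * b) = d a * b + a * d b)
    (h : HahnSeries ℤ R) :
    ∀ f ∈ Submodule.span R (Set.range (fdb d h)),
      covD d h f ∈ Submodule.span R (Set.range (fdb d h)) :=
  covD_mem_span_of_forall_mem hd h <| by
    rintro _ ⟨k, rfl⟩
    exact Submodule.subset_span ⟨k + 1, rfl⟩

theorem kp_invariance_general (d : R →+ R) (dT : ℕ → R →+ R)
    (hd : ∀ a b : R, d (a * b) = d a * b + a * d b)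
    (hdT : ∀ j, ∀ a b : R, dT j (a * b) = dT j a * b + a * dT j b)
    (hcomm : ∀ j a, dT j (d a) = d (dT j a))
    (h : HahnSeries ℤ R)
    (H : ℕ → HahnSeries ℤ R)
    (hHmem : ∀ j, H j ∈ Submodule.span R (Set.range (fdb d h)))
    (hKP : ∀ j, liftD (dT j) h = liftD d (H j)) :
    ∀ j, ∀ f ∈ Submodule.span R (Set.range (fdb d h)),
      liftD (dT j) f + H j * f ∈ Submodule.span R (Set.range (fdb d h)) := by
  intro j
  refine covD_mem_span_of_forall_mem (hdT j) (H j) ?_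
  rintro _ ⟨k, rfl⟩
  induction k with
  | zero => simpa [fdb, covD_one (hdT j)] using hHmem j
  | succ k ih =>
    rw [fdb_succ, covD_comm hd (hdT j) (hcomm j) (hKP j)]
    exact covD_mem_span_fdb hd h _ ih

/-- if the monic Laurent series `h` evolves by the KP equations
`∂h/∂t_j = ∂_x H⁽ʲ⁾`, where the currents `H⁽ʲ⁾ ∈ H₊` have the expansion
`z^j + O(z^{-1})`, then each operator `∂/∂t_j + H⁽ʲ⁾` preserves the span `H₊`
of the Faà di Bruno iterates of `h`. -/
theorem kp_invariance (d : R →+ R) (dT : ℕ → R →+ R)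
    (hd : ∀ a b : R, d (a * b) = d a * b + a * d b)
    (hdT : ∀ j, ∀ a b : R, dT j (a * b) = dT j a * b + a * dT j b)
    (hcomm : ∀ j a, dT j (d a) = d (dT j a))
    (h : HahnSeries ℤ R)
    (h_monic : h.coeff (-1) = 1 ∧ h.coeff 0 = 0 ∧ ∀ n : ℤ, n < -1 → h.coeff n = 0)
    (H : ℕ → HahnSeries ℤ R)
    (hHmem : ∀ j, H j ∈ Submodule.span R (Set.range (fdb d h)))
    (hHshape : ∀ j, (H j).coeff (-(j : ℤ)) = 1 ∧
      (∀ n : ℤ, n < -(j : ℤ) → (H j).coeff n = 0) ∧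
      (∀ n : ℤ, -(j : ℤ) < n → n ≤ 0 → (H j).coeff n = 0))
    (hKP : ∀ j, liftD (dT j) h = liftD d (H j)) :
    ∀ j, ∀ f ∈ Submodule.span R (Set.range (fdb d h)),
      liftD (dT j) f + H j * f ∈ Submodule.span R (Set.range (fdb d h)) :=
  kp_invariance_general d dT hd hdT hcomm h H hHmem hKP
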